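/- For any self-adjoint generalized ring A, the set ESpec(A) of stable primes is dense in spec(A) for the Zariski topology: for every a ∈ A_{[1]}, the basic open set D_a is empty if and only if D_a ∩ ESpec(A) is empty (both being equivalent to a being nilpotent). -/

import Mathlib

open scoped Classical

noncomputable section

/-! ### Partially defined maps of finite sets -/

/-- Composition of partially defined maps of sets (`Set_•`). -/
def pcomp {X Y Z : Type} (g : Y → Option Z) (f : X → Option Y) : X → Option Z :=
  fun x => (f x).bind g

/-- The fiber of a partially defined map over a point of the target. -/
abbrev pfib {X Y : Type} (f : X → Option Y) (y : Y) : Type := {x : X // f x = some y}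

/-- The fiber of the identity partial map over `x` is a singleton. -/
def idFiberEquiv {X : Type} (x : X) : Fin 1 ≃ pfib (fun x' : X => some x') x where
  toFun _ := ⟨x, rfl⟩
  invFun _ := 0
  left_inv _ := Subsingleton.elim _ _
  right_inv p := Subtype.ext (Option.some.inj p.2).symm

/-- The fiber of the constant (total) map to the point `[1]` is everything. -/
def constFiberEquiv (X : Type) (z : Fin 1) :
    X ≃ pfib (fun _ : X => some (0 : Fin 1)) z where
  toFun x := ⟨x, congrArg some (Subsingleton.elim (0 : Fin 1) z)⟩
  invFun p := p.1
  left_inv _ := rfl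
  right_inv p := rfl

/-- The fiber of (the graph of) a bijection is a singleton. -/
def equivFiberEquiv {X Y : Type} (e : X ≃ Y) (y : Y) :
    Fin 1 ≃ pfib (fun x : X => some (e x)) y where
  toFun _ := ⟨e.symm y, congrArg some (e.apply_symm_apply y)⟩
  invFun _ := 0
  left_inv _ := Subsingleton.elim _ _
  right_inv p := Subtype.ext ((Equiv.symm_apply_eq e).mpr (Option.some.inj p.2).symm)

/-- The fiber of the map `[1] → X` with image `{x}` over `x' = x` is a singleton. -/
def pointFiberEquiv {X : Type} {x x' : X} (h : x = x') :
    Fin 1 ≃ pfib (fun _ : Fin 1 => some x) x' where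
  toFun z := ⟨z, congrArg some h⟩
  invFun p := p.1
  left_inv _ := rfl
  right_inv p := rfl

/-- Restriction of `f` to the fiber of `pcomp g f` over `z`, as a partial map into
the fiber of `g` over `z`. -/
def resMap {X Y Z : Type} (g : Y → Option Z) (f : X → Option Y) (z : Z) :
    pfib (pcomp g f) z → Option (pfib g z) :=
  fun x => (f x.1).bind fun y => if h : g y = some z then some ⟨y, h⟩ else none

/-- Identification of the fibers of the restriction `resMap g f z` with fibers of `f`. -/
def resFiberEquiv {X Y Z : Type} (g : Y → Option Z) (f : X → Option Y) (z : Z)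
    (p : pfib g z) : pfib f p.1 ≃ pfib (resMap g f z) p where
  toFun x := ⟨⟨x.1, by show (f x.1).bind g = some z; rw [x.2, Option.bind_some, p.2]⟩, by
    show (f x.1).bind _ = some p
    rw [x.2, Option.bind_some, dif_pos p.2]⟩
  invFun q := ⟨q.1.1, by
    have h := q.2
    unfold resMap at h
    rcases hf : f q.1.1 with _ | y
    · rw [hf, Option.bind_none] at h
      exact nomatch h
    · rw [hf, Option.bind_some] at h
      by_cases hg : g y = some z
      · rw [dif_pos hg] at h
        have hy : y = p.1 := congrArg Subtype.val (Option.some.inj h)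
        exact congrArg some hy
      · rw [dif_neg hg] at h
        exact nomatch h⟩
  left_inv x := Subtype.ext rfl
  right_inv q := Subtype.ext (Subtype.ext rfl)

/-! ### Fibered products -/

/-- The fibered product of two partial maps `g : Z ⇀ Y` and `f : X ⇀ Y`. -/
abbrev FP {X Y Z : Type} (g : Z → Option Y) (f : X → Option Y) : Type :=
  {p : Z × X // ∃ y : Y, g p.1 = some y ∧ f p.2 = some y}

/-- First projection of the fibered product, as a partial map. -/
def fpFst {X Y Z : Type} (g : Z → Option Y) (f : X → Option Y) : FP g f → Option Z :=
  fun p => some p.1.1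

/-- Second projection of the fibered product, as a partial map. -/
def fpSnd {X Y Z : Type} (g : Z → Option Y) (f : X → Option Y) : FP g f → Option X :=
  fun p => some p.1.2

/-- Identification of the fiber of the second projection of `Z ×_Y X` over `x`
with the fiber of `g` over `f x`. -/
def fpFiberSnd {X Y Z : Type} (g : Z → Option Y) (f : X → Option Y) {x : X} {y : Y}
    (hy : f x = some y) : pfib g y ≃ pfib (fpSnd g f) x where
  toFun w := ⟨⟨(w.1, x), ⟨y, w.2, hy⟩⟩, rfl⟩
  invFun q := ⟨q.1.1.1, by
    obtain ⟨y', hg, hf⟩ := q.1.2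
    have hx : q.1.1.2 = x := Option.some.inj q.2
    rw [hx] at hf
    have hyy : y' = y := Option.some.inj (hf.symm.trans hy)
    rw [hyy] at hg
    exact hg⟩
  left_inv w := Subtype.ext rfl
  right_inv q := by
    apply Subtype.ext
    apply Subtype.ext
    have hx : q.1.1.2 = x := Option.some.inj q.2
    exact Prod.ext rfl hx.symm

/-- Identification of the fiber of the first projection of `Z ×_Y X` over `z`
with the fiber of `f` over `g z`. -/
def fpFiberFst {X Y Z : Type} (g : Z → Option Y) (f : X → Option Y) {z : Z} {y : Y}
    (hy : g z = some y) : pfib f y ≃ pfib (fpFst g f) z where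
  toFun w := ⟨⟨(z, w.1), ⟨y, hy, w.2⟩⟩, rfl⟩
  invFun q := ⟨q.1.1.2, by
    obtain ⟨y', hg, hf⟩ := q.1.2
    have hz : q.1.1.1 = z := Option.some.inj q.2
    rw [hz] at hg
    have hyy : y' = y := Option.some.inj (hg.symm.trans hy)
    rw [hyy] at hf
    exact hf⟩
  left_inv w := Subtype.ext rfl
  right_inv q := by
    apply Subtype.ext
    apply Subtype.ext
    have hz : q.1.1.1 = z := Option.some.inj q.2
    exact Prod.ext hz.symm rfl
/-! ### Generalized rings

A generalized ring assigns to each finite set `X` a pointed set `A X`, functorially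
with respect to bijections (and hence, via the operations and units, with respect to
all partial bijections of finite sets), together with operations of multiplication
`∘ : A Y × A f → A X` and contraction `( , ) : A X × A f → A Y` for every partially
defined map `f : X ⇀ Y`, where `A f = ∏_{y ∈ Y} A (f⁻¹ y)`, and a unit `1 ∈ A [1]`,
subject to the axioms of associativity, left- and right-adjunction, left- and
right-linearity, and the unit axioms. -/

/-- The data underlying a generalized ring. -/
structure GenRingData where
  /-- the pointed set attached to a finite set `X` -/
  A : (X : Type) → [inst : Finite X] → Type
  /-- the base point `0_X ∈ A_X` -/
  zero : (X : Type) → [inst : Finite X] → A X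
  /-- the unit `1 ∈ A_{[1]}` -/
  one : A (Fin 1)
  /-- functoriality with respect to bijections of finite sets -/
  map : {X Y : Type} → [inst : Finite X] → [inst' : Finite Y] → (X ≃ Y) → A X → A Y
  /-- multiplication `∘ : A_Y × A_f → A_X` for a partially defined map `f : X ⇀ Y` -/
  mul : {X Y : Type} → [inst : Finite X] → [inst' : Finite Y] → (f : X → Option Y) →
      A Y → ((y : Y) → A (pfib f y)) → A X
  /-- contraction `( , ) : A_X × A_f → A_Y` for a partially defined map `f : X ⇀ Y` -/
  contr : {X Y : Type} → [inst : Finite X] → [inst' : Finite Y] → (f : X → Option Y) →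
      A X → ((y : Y) → A (pfib f y)) → A Y

namespace GenRingData

variable (R : GenRingData)

/-- The unit family `1_{id_X} ∈ A_{id_X}`. -/
def oneId (X : Type) [Finite X] : (x : X) → R.A (pfib (fun x' : X => some x') x) :=
  fun x => R.map (idFiberEquiv x) R.one

/-- The monoid operation `a ∘ b` on `A_{[1]}`. -/
def op (a b : R.A (Fin 1)) : R.A (Fin 1) :=
  R.mul (fun z : Fin 1 => some z) a (fun z => R.map (idFiberEquiv z) b)

/-- The `n`-fold power `a ∘ ⋯ ∘ a` in the monoid `A_{[1]}` (with `a⁰ = 1`). -/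
def opPow (a : R.A (Fin 1)) : ℕ → R.A (Fin 1)
  | 0 => R.one
  | n + 1 => R.op a (opPow a n)

/-- The left action `s ∘ a` of `A_{[1]}` on `A_X` (operation (1.2.5)). -/
def lact {X : Type} [Finite X] (s : R.A (Fin 1)) (a : R.A X) : R.A X :=
  R.mul (fun _ : X => some (0 : Fin 1)) s (fun z => R.map (constFiberEquiv X z) a)

/-- The pairing `(a, d) : A_X × A_X → A_{[1]}` (operation (1.2.6)). -/
def pair {X : Type} [Finite X] (a d : R.A X) : R.A (Fin 1) :=
  R.contr (fun _ : X => some (0 : Fin 1)) a (fun z => R.map (constFiberEquiv X z) d)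

/-- The right (diagonal) action `b ∘ c` of `(A_{[1]})^X` on `A_X` (operation (1.2.7)). -/
def ract {X : Type} [Finite X] (b : R.A X) (c : X → R.A (Fin 1)) : R.A X :=
  R.mul (fun x : X => some x) b (fun x => R.map (idFiberEquiv x) (c x))

/-- The involution `a ↦ aᵗ = (1, a)` of `A_{[1]}`. -/
def adj (a : R.A (Fin 1)) : R.A (Fin 1) := R.pair R.one a

/-- The element `(a, 1_{j_x}) ∈ A_X` obtained from `a ∈ A_{[1]}` via the
inclusion `j_x : {x} ↪ X`; for `a = 1` this is the image `1_x` of the unit. -/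
def pointElt (X : Type) [Finite X] (x : X) (a : R.A (Fin 1)) : R.A X :=
  R.contr (fun _ : Fin 1 => some x) a
    (fun x' => if h : x = x' then R.map (pointFiberEquiv h) R.one else R.zero _)

/-- The extended multiplication `A_g × A_f → A_{g∘f}`, defined fiberwise. -/
def emul {X Y Z : Type} [Finite X] [Finite Y] [Finite Z]
    (g : Y → Option Z) (f : X → Option Y)
    (c : (z : Z) → R.A (pfib g z)) (b : (y : Y) → R.A (pfib f y)) :
    (z : Z) → R.A (pfib (pcomp g f) z) :=
  fun z => R.mul (resMap g f z) (c z) (fun p => R.map (resFiberEquiv g f z p) (b p.1))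

/-- The extended contraction `A_{g∘f} × A_f → A_g`, defined fiberwise. -/
def econtr {X Y Z : Type} [Finite X] [Finite Y] [Finite Z]
    (g : Y → Option Z) (f : X → Option Y)
    (a : (z : Z) → R.A (pfib (pcomp g f) z)) (b : (y : Y) → R.A (pfib f y)) :
    (z : Z) → R.A (pfib g z) :=
  fun z => R.contr (resMap g f z) (a z) (fun p => R.map (resFiberEquiv g f z p) (b p.1))

/-- The pullback `ã ∈ A_{g̃}` of `a ∈ A_g` along the fibered product (used in
the right-linearity axiom). -/
def atilde {X Y Z : Type} [Finite X] [Finite Y] [Finite Z]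
    (g : Z → Option Y) (f : X → Option Y) (a : (y : Y) → R.A (pfib g y)) :
    (x : X) → R.A (pfib (fpSnd g f) x) :=
  fun x =>
    match hfx : f x with
    | some y => R.map (fpFiberSnd g f hfx) (a y)
    | none => R.zero _

/-- The pullback `c̃ ∈ A_{f̃}` of `c ∈ A_f` along the fibered product (used in
the right-linearity axiom). -/
def ctilde {X Y Z : Type} [Finite X] [Finite Y] [Finite Z]
    (g : Z → Option Y) (f : X → Option Y) (c : (y : Y) → R.A (pfib f y)) :
    (z : Z) → R.A (pfib (fpFst g f) z) :=
  fun z =>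
    match hgz : g z with
    | some y => R.map (fpFiberFst g f hgz) (c y)
    | none => R.zero _

end GenRingData

/-- A generalized ring: the data of `GenRingData` subject to the axioms
(pointedness, functoriality, zero laws, associativity, left/right adjunction,
left/right linearity, and the unit axioms, the latter in their reduced form over
the one-point base, which is equivalent to the general form). -/
structure GenRing where
  /-- the underlying data -/
  data : GenRingData
  /-- `A_∅ = {0}` -/
  isEmpty_eq_zero : ∀ (X : Type) [Finite X] [IsEmpty X] (a : data.A X), a = data.zero X
  /-- functoriality: identity -/
  map_refl : ∀ (X : Type) [Finite X] (a : data.A X), data.map (Equiv.refl X) a = a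
  /-- functoriality: composition -/
  map_trans : ∀ {X Y Z : Type} [Finite X] [Finite Y] [Finite Z] (e : X ≃ Y) (e' : Y ≃ Z)
      (a : data.A X), data.map (e.trans e') a = data.map e' (data.map e a)
  /-- functoriality: the maps are pointed -/
  map_zero : ∀ {X Y : Type} [Finite X] [Finite Y] (e : X ≃ Y),
      data.map e (data.zero X) = data.zero Y
  /-- `0 ∘ b = 0` -/
  mul_zero_left : ∀ {X Y : Type} [Finite X] [Finite Y] (f : X → Option Y)
      (b : (y : Y) → data.A (pfib f y)), data.mul f (data.zero Y) b = data.zero X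
  /-- `a ∘ 0_f = 0` -/
  mul_zero_right : ∀ {X Y : Type} [Finite X] [Finite Y] (f : X → Option Y) (a : data.A Y),
      data.mul f a (fun y => data.zero (pfib f y)) = data.zero X
  /-- `(0, b) = 0` -/
  contr_zero_left : ∀ {X Y : Type} [Finite X] [Finite Y] (f : X → Option Y)
      (b : (y : Y) → data.A (pfib f y)), data.contr f (data.zero X) b = data.zero Y
  /-- `(a, 0_f) = 0` -/
  contr_zero_right : ∀ {X Y : Type} [Finite X] [Finite Y] (f : X → Option Y) (a : data.A X),
      data.contr f a (fun y => data.zero (pfib f y)) = data.zero Y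
  /-- associativity: `d ∘ (c ∘ b) = (d ∘ c) ∘ b` -/
  assoc : ∀ {X Y Z : Type} [Finite X] [Finite Y] [Finite Z]
      (g : Y → Option Z) (f : X → Option Y) (d : data.A Z)
      (c : (z : Z) → data.A (pfib g z)) (b : (y : Y) → data.A (pfib f y)),
      data.mul (pcomp g f) d (data.emul g f c b) = data.mul f (data.mul g d c) b
  /-- left-adjunction: `(d, a ∘ c) = ((d, c), a)` -/
  left_adj : ∀ {X Y Z : Type} [Finite X] [Finite Y] [Finite Z]
      (g : Y → Option Z) (f : X → Option Y) (d : data.A X)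
      (a : (z : Z) → data.A (pfib g z)) (c : (y : Y) → data.A (pfib f y)),
      data.contr (pcomp g f) d (data.emul g f a c) = data.contr g (data.contr f d c) a
  /-- right-adjunction: `(d ∘ c, a) = (d, (a, c))` -/
  right_adj : ∀ {X Y Z : Type} [Finite X] [Finite Y] [Finite Z]
      (g : Y → Option Z) (f : X → Option Y) (d : data.A Y)
      (a : (z : Z) → data.A (pfib (pcomp g f) z)) (c : (y : Y) → data.A (pfib f y)),
      data.contr (pcomp g f) (data.mul f d c) a = data.contr g d (data.econtr g f a c)
  /-- left-linearity: `(d ∘ a, c) = d ∘ (a, c)` -/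
  left_lin : ∀ {X Y Z : Type} [Finite X] [Finite Y] [Finite Z]
      (g : Y → Option Z) (f : X → Option Y) (d : data.A Z)
      (a : (z : Z) → data.A (pfib (pcomp g f) z)) (c : (y : Y) → data.A (pfib f y)),
      data.contr f (data.mul (pcomp g f) d a) c = data.mul g d (data.econtr g f a c)
  /-- right-linearity: `(d, c) ∘ a = (d ∘ ã, c̃)`, with `ã`, `c̃` the pullbacks
  along the fibered product `Z ×_Y X` -/
  right_lin : ∀ {X Y Z : Type} [Finite X] [Finite Y] [Finite Z]
      (g : Z → Option Y) (f : X → Option Y) (d : data.A X)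
      (a : (y : Y) → data.A (pfib g y)) (c : (y : Y) → data.A (pfib f y)),
      data.mul g (data.contr f d c) a
        = data.contr (fpFst g f) (data.mul (fpSnd g f) d (data.atilde g f a))
            (data.ctilde g f c)
  /-- unit axiom: `a ∘ 1_{id_X} = a` -/
  mul_one_id : ∀ (X : Type) [Finite X] (a : data.A X),
      data.mul (fun x : X => some x) a (data.oneId X) = a
  /-- unit axiom: `1 ∘ a = a` -/
  one_lact : ∀ (X : Type) [Finite X] (a : data.A X), data.lact data.one a = a
  /-- unit axiom: `(a, 1_{id_X}) = a` -/
  contr_one_id : ∀ (X : Type) [Finite X] (a : data.A X),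
      data.contr (fun x : X => some x) a (data.oneId X) = a
  /-- unit axiom (1.8.11): `(a, 1_f) = f_A(a)` for a bijection `f = e` -/
  map_eq_contr : ∀ {X Y : Type} [Finite X] [Finite Y] (e : X ≃ Y) (a : data.A X),
      data.contr (fun x : X => some (e x)) a
        (fun y => data.map (equivFiberEquiv e y) data.one) = data.map e a
  /-- unit axiom (1.8.11): `a ∘ 1_{fᵗ} = f_A(a)` for a bijection `f = e` -/
  map_eq_mul : ∀ {X Y : Type} [Finite X] [Finite Y] (e : X ≃ Y) (a : data.A X),
      data.mul (fun y : Y => some (e.symm y)) a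
        (fun x => data.map (equivFiberEquiv e.symm x) data.one) = data.map e a
namespace GenRing

variable (R : GenRing)

/-- An `h`-ideal of a generalized ring: a subset `I ⊆ A_{[1]}` such that
`(b ∘ c, d) ∈ I` for all finite `X`, all `b, d ∈ A_X` and all `c ∈ I^X ⊆ (A_{[1]})^X`. -/
def IsHIdeal (I : Set (R.data.A (Fin 1))) : Prop :=
  ∀ (X : Type) [Finite X], ∀ (b d : R.data.A X) (c : X → R.data.A (Fin 1)),
    (∀ x, c x ∈ I) → R.data.pair (R.data.ract b c) d ∈ I

/-- A prime of a generalized ring: a proper `h`-ideal `P` whose complement is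
closed under the multiplication of `A_{[1]}`. -/
def IsPrimeH (P : Set (R.data.A (Fin 1))) : Prop :=
  R.IsHIdeal P ∧ R.data.one ∉ P ∧
    ∀ a b : R.data.A (Fin 1), R.data.op a b ∈ P → a ∈ P ∨ b ∈ P

end GenRing

/-- The spectrum of a generalized ring: the set of its primes. -/
structure SpecG (R : GenRing) where
  /-- the underlying prime `h`-ideal -/
  I : Set (R.data.A (Fin 1))
  /-- it is prime -/
  prime : R.IsPrimeH I

namespace GenRing

variable (R : GenRing)

/-- The basic open set `D_a = {𝔭 : a ∉ 𝔭}` of the Zariski topology. -/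
def basicOpen (a : R.data.A (Fin 1)) : Set (SpecG R) := {p | a ∉ p.I}

/-- The closed set `V(s) = {𝔭 : 𝔭 ⊇ s}` of the Zariski topology. -/
def zeroLocus (s : Set (R.data.A (Fin 1))) : Set (SpecG R) := {p | s ⊆ p.I}

/-- The Zariski topology on the spectrum, generated by the basic open sets. -/
instance : TopologicalSpace (SpecG R) :=
  TopologicalSpace.generateFrom {U | ∃ a : R.data.A (Fin 1), U = R.basicOpen a}

end GenRing

/-- A homomorphism of generalized rings: a (pointed, natural) family of maps
preserving multiplication, contraction and the unit. -/
structure GenRingHom (R S : GenRing) where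
  /-- the underlying family of maps -/
  app : (X : Type) → [inst : Finite X] → R.data.A X → S.data.A X
  /-- zero is preserved -/
  app_zero : ∀ (X : Type) [Finite X], app X (R.data.zero X) = S.data.zero X
  /-- the unit is preserved -/
  app_one : app (Fin 1) R.data.one = S.data.one
  /-- naturality with respect to bijections -/
  app_map : ∀ {X Y : Type} [Finite X] [Finite Y] (e : X ≃ Y) (a : R.data.A X),
      app Y (R.data.map e a) = S.data.map e (app X a)
  /-- multiplication is preserved -/
  app_mul : ∀ {X Y : Type} [Finite X] [Finite Y] (f : X → Option Y)
      (a : R.data.A Y) (b : (y : Y) → R.data.A (pfib f y)),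
      app X (R.data.mul f a b) = S.data.mul f (app Y a) (fun y => app (pfib f y) (b y))
  /-- contraction is preserved -/
  app_contr : ∀ {X Y : Type} [Finite X] [Finite Y] (f : X → Option Y)
      (a : R.data.A X) (b : (y : Y) → R.data.A (pfib f y)),
      app Y (R.data.contr f a b) = S.data.contr f (app X a) (fun y => app (pfib f y) (b y))

namespace GenRingHom

variable {R S : GenRing} (φ : GenRingHom R S)

theorem app_op (a b : R.data.A (Fin 1)) :
    φ.app (Fin 1) (R.data.op a b) = S.data.op (φ.app (Fin 1) a) (φ.app (Fin 1) b) := by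
  unfold GenRingData.op
  rw [φ.app_mul]
  congr 1
  funext z
  rw [φ.app_map]

theorem app_ract {X : Type} [Finite X] (b : R.data.A X) (c : X → R.data.A (Fin 1)) :
    φ.app X (R.data.ract b c) = S.data.ract (φ.app X b) (fun x => φ.app (Fin 1) (c x)) := by
  unfold GenRingData.ract
  rw [φ.app_mul]
  congr 1
  funext x
  rw [φ.app_map]

theorem app_pair {X : Type} [Finite X] (a d : R.data.A X) :
    φ.app (Fin 1) (R.data.pair a d) = S.data.pair (φ.app X a) (φ.app X d) := by
  unfold GenRingData.pair
  rw [φ.app_contr]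
  congr 1
  funext z
  rw [φ.app_map]

theorem app_lact {X : Type} [Finite X] (s : R.data.A (Fin 1)) (a : R.data.A X) :
    φ.app X (R.data.lact s a) = S.data.lact (φ.app (Fin 1) s) (φ.app X a) := by
  unfold GenRingData.lact
  rw [φ.app_mul]
  congr 1
  funext z
  rw [φ.app_map]

/-- The map `spec(φ) : spec(S) → spec(R)`, `𝔮 ↦ φ_{[1]}⁻¹(𝔮)`, induced by a
homomorphism of generalized rings `φ : R → S`. -/
def specMap (q : SpecG S) : SpecG R where
  I := φ.app (Fin 1) ⁻¹' q.I
  prime := by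
    refine ⟨?_, ?_, ?_⟩
    · intro X _ b d c hc
      show φ.app (Fin 1) (R.data.pair (R.data.ract b c) d) ∈ q.I
      rw [φ.app_pair, φ.app_ract]
      exact q.prime.1 X (φ.app X b) (φ.app X d) (fun x => φ.app (Fin 1) (c x)) hc
    · show φ.app (Fin 1) R.data.one ∉ q.I
      rw [φ.app_one]
      exact q.prime.2.1
    · intro a b hab
      have h : S.data.op (φ.app (Fin 1) a) (φ.app (Fin 1) b) ∈ q.I := by
        rw [← φ.app_op]; exact hab
      exact q.prime.2.2 _ _ h

end GenRingHom

/-- An equivalence ideal of a generalized ring: a family of equivalence relations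
on the sets `A_X` respecting the operations of multiplication and contraction. -/
structure EqvIdeal (R : GenRing) where
  /-- the family of relations -/
  rel : (X : Type) → [inst : Finite X] → R.data.A X → R.data.A X → Prop
  refl : ∀ (X : Type) [Finite X] (a : R.data.A X), rel X a a
  symm : ∀ (X : Type) [Finite X] {a b : R.data.A X}, rel X a b → rel X b a
  trans : ∀ (X : Type) [Finite X] {a b c : R.data.A X}, rel X a b → rel X b c → rel X a c
  /-- `a ∼ a'` implies `a ∘ b ∼ a' ∘ b` -/
  mul_left : ∀ {X Y : Type} [Finite X] [Finite Y] (f : X → Option Y) {a a' : R.data.A Y}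
      (b : (y : Y) → R.data.A (pfib f y)),
      rel Y a a' → rel X (R.data.mul f a b) (R.data.mul f a' b)
  /-- `b ∼ b'` (componentwise) implies `a ∘ b ∼ a ∘ b'` -/
  mul_right : ∀ {X Y : Type} [Finite X] [Finite Y] (f : X → Option Y) (a : R.data.A Y)
      {b b' : (y : Y) → R.data.A (pfib f y)},
      (∀ y, rel (pfib f y) (b y) (b' y)) → rel X (R.data.mul f a b) (R.data.mul f a b')
  /-- `a ∼ a'` implies `(a, b) ∼ (a', b)` -/
  contr_left : ∀ {X Y : Type} [Finite X] [Finite Y] (f : X → Option Y) {a a' : R.data.A X}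
      (b : (y : Y) → R.data.A (pfib f y)),
      rel X a a' → rel Y (R.data.contr f a b) (R.data.contr f a' b)
  /-- `b ∼ b'` (componentwise) implies `(a, b) ∼ (a, b')` -/
  contr_right : ∀ {X Y : Type} [Finite X] [Finite Y] (f : X → Option Y) (a : R.data.A X)
      {b b' : (y : Y) → R.data.A (pfib f y)},
      (∀ y, rel (pfib f y) (b y) (b' y)) → rel Y (R.data.contr f a b) (R.data.contr f a b')

namespace GenRing

variable (R : GenRing)

/-- The equivalence ideal `E(I)` generated by an (`h`-)ideal `I`: `a ∼ b` iff the
pair `(a, b)` belongs to every equivalence ideal containing `(i, 0)` for all `i ∈ I`. -/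
def erel (I : Set (R.data.A (Fin 1))) (X : Type) [Finite X] (a b : R.data.A X) : Prop :=
  ∀ ε : EqvIdeal R, (∀ i ∈ I, ε.rel (Fin 1) i (R.data.zero (Fin 1))) → ε.rel X a b

/-- A stable `h`-ideal: an `h`-ideal `I` such that for every pair `(a, b)` in the
equivalence ideal `E(I)` generated by `I` one has `a ∈ I ↔ b ∈ I`. -/
def IsStableHIdeal (I : Set (R.data.A (Fin 1))) : Prop :=
  R.IsHIdeal I ∧ ∀ a b : R.data.A (Fin 1), R.erel I (Fin 1) a b → (a ∈ I ↔ b ∈ I)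

/-- A multiplicative subset of `A_{[1]}`: contains `1`, closed under `∘`,
and stable under the involution. -/
def IsMulSet (S : Set (R.data.A (Fin 1))) : Prop :=
  R.data.one ∈ S ∧ (∀ a ∈ S, ∀ b ∈ S, R.data.op a b ∈ S) ∧
    (∀ a, a ∈ S ↔ R.data.adj a ∈ S)

/-- `φ : R → L` presents `L` as the localization `S⁻¹R` of `R` at the
multiplicative subset `S ⊆ A_{[1]}`: every element of `S` becomes invertible, every
element of `L` is a fraction `φ(a)/φ(s)`, and `φ(a) = φ(b)` iff `s ∘ a = s ∘ b`
for some `s ∈ S`. -/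
def IsLocalizationAt (S : Set (R.data.A (Fin 1))) {L : GenRing} (φ : GenRingHom R L) : Prop :=
  (∀ s ∈ S, ∃ t : L.data.A (Fin 1),
      L.data.op t (φ.app (Fin 1) s) = L.data.one ∧
      L.data.op (φ.app (Fin 1) s) t = L.data.one) ∧
  (∀ (X : Type) [Finite X], ∀ l : L.data.A X, ∃ (a : R.data.A X) (s : R.data.A (Fin 1)),
      s ∈ S ∧ L.data.lact (φ.app (Fin 1) s) l = φ.app X a) ∧
  (∀ (X : Type) [Finite X], ∀ a b : R.data.A X,
      φ.app X a = φ.app X b ↔ ∃ s ∈ S, R.data.lact s a = R.data.lact s b)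

end GenRing

/-!
In a self-adjoint generalized ring, `A_{[1]}` is a commutative monoid and the scalar operation
`γ ↦ t ∘ γ` (equivalently, the contraction of `γ` against the diagonal family `t`) commutes with
every multiplication and contraction. Hence for an `h`-ideal `M` the relation
`t ∘ α ∼_{E(M)} t ∘ β` is an equivalence ideal, so `t ∘ J ⊆ M` forces `t` to map the saturation
`{x : x ∼_{E(J)} 0}` of `J` into that of `M`.

If `a` is not nilpotent, Zorn's lemma gives an `h`-ideal `M` maximal among those whose saturation
misses the powers of `a`. Maximality makes `M` its own saturation, i.e. stable, and the transport
above makes it prime, exactly as in the classical proof that a non-nilpotent element avoids some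
prime. Conversely a nilpotent element lies in every prime.
-/

namespace EqvIdeal

variable {R : GenRing}

theorem rel_map (ε : EqvIdeal R) {X Y : Type} [Finite X] [Finite Y] (e : X ≃ Y)
    {a b : R.data.A X} (h : ε.rel X a b) : ε.rel Y (R.data.map e a) (R.data.map e b) := by
  have h' := ε.mul_left (fun y : Y => some (e.symm y))
    (fun x => R.data.map (equivFiberEquiv e.symm x) R.data.one) h
  rwa [R.map_eq_mul e a, R.map_eq_mul e b] at h'

def eqRel (R : GenRing) : EqvIdeal R where
  rel _ _ a b := a = b
  refl _ _ _ := rfl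
  symm _ _ _ _ h := h.symm
  trans _ _ _ _ _ h h' := h.trans h'
  mul_left _ _ _ _ h := by rw [h]
  mul_right f a _ _ h := by rw [funext h]
  contr_left _ _ _ _ h := by rw [h]
  contr_right f a _ _ h := by rw [funext h]

end EqvIdeal

namespace GenRing

variable {R : GenRing}

/-! ### Transport along bijections -/

theorem map_map {X Y Z : Type} [Finite X] [Finite Y] [Finite Z] (e : X ≃ Y) (e' : Y ≃ Z)
    (a : R.data.A X) : R.data.map e' (R.data.map e a) = R.data.map (e.trans e') a :=
  (R.map_trans e e' a).symm

theorem map_eq_map_of_subsingleton {X Y : Type} [Finite X] [Finite Y] [Subsingleton Y]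
    (e e' : X ≃ Y) (a : R.data.A X) : R.data.map e a = R.data.map e' a := by
  rw [Subsingleton.elim e e']

theorem pfib_subsingleton {X Y : Type} {f : X → Option Y}
    (hf : ∀ x₁ x₂ y, f x₁ = some y → f x₂ = some y → x₁ = x₂) (y : Y) :
    Subsingleton (pfib f y) :=
  ⟨fun p q => Subtype.ext (hf _ _ y p.2 q.2)⟩

theorem pfib_subsingleton_of_injective {X Y : Type} {φ : X → Y}
    (hφ : Function.Injective φ) (y : Y) : Subsingleton (pfib (fun x => some (φ x)) y) :=
  pfib_subsingleton (fun _ _ _ h₁ h₂ => hφ (Option.some.inj (h₁.trans h₂.symm))) y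

instance pfib_some_subsingleton {X : Type} (x : X) :
    Subsingleton (pfib (fun x' : X => some x') x) :=
  pfib_subsingleton_of_injective Function.injective_id x

theorem pi_fin_one_ext {C : Fin 1 → Sort*} {F G : (z : Fin 1) → C z} (h : F 0 = G 0) :
    F = G :=
  funext fun z => by obtain rfl := Subsingleton.elim z 0; exact h

def pfibCongr {X Y : Type} {f g : X → Option Y} (h : f = g) (y : Y) : pfib f y ≃ pfib g y :=
  Equiv.subtypeEquivRight fun x => by rw [h]

theorem mul_congr {X Y : Type} [Finite X] [Finite Y] {f g : X → Option Y} (h : f = g)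
    (a : R.data.A Y) (b : (y : Y) → R.data.A (pfib f y)) :
    R.data.mul f a b = R.data.mul g a (fun y => R.data.map (pfibCongr h y) (b y)) := by
  subst h
  exact congrArg _ (funext fun y => (R.map_refl _ (b y)).symm)

theorem contr_congr {X Y : Type} [Finite X] [Finite Y] {f g : X → Option Y} (h : f = g)
    (a : R.data.A X) (b : (y : Y) → R.data.A (pfib f y)) :
    R.data.contr f a b = R.data.contr g a (fun y => R.data.map (pfibCongr h y) (b y)) := by
  subst h
  exact congrArg _ (funext fun y => (R.map_refl _ (b y)).symm)

theorem pcomp_id_left {X Y : Type} (f : X → Option Y) : pcomp (fun y : Y => some y) f = f :=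
  funext fun x => by
    show (f x).bind some = f x
    cases f x <;> rfl

theorem resMap_of_eq_some {X Y Z : Type} (g : Y → Option Z) (f : X → Option Y) (z : Z)
    (q : pfib (pcomp g f) z) {y : Y} (hf : f q.1 = some y) (hg : g y = some z) :
    resMap g f z q = some ⟨y, hg⟩ := by
  simp only [resMap, hf, Option.bind_some, dif_pos hg]

theorem resMap_id_right {X Y : Type} (g : X → Option Y) (y : Y) :
    resMap g (fun x : X => some x) y = fun q => some q :=
  funext fun q => resMap_of_eq_some g _ y q rfl q.2

theorem atilde_of_eq_some {X Y Z : Type} [Finite X] [Finite Y] [Finite Z]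
    (g : Z → Option Y) (f : X → Option Y) (a : (y : Y) → R.data.A (pfib g y))
    {x : X} {y : Y} (h : f x = some y) :
    R.data.atilde g f a x = R.data.map (fpFiberSnd g f h) (a y) := by
  unfold GenRingData.atilde
  split
  · rename_i y' h'
    obtain rfl : y' = y := Option.some.inj (h'.symm.trans h)
    rfl
  · rename_i h'
    cases h'.symm.trans h

theorem ctilde_of_eq_some {X Y Z : Type} [Finite X] [Finite Y] [Finite Z]
    (g : Z → Option Y) (f : X → Option Y) (c : (y : Y) → R.data.A (pfib f y))
    {z : Z} {y : Y} (h : g z = some y) :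
    R.data.ctilde g f c z = R.data.map (fpFiberFst g f h) (c y) := by
  unfold GenRingData.ctilde
  split
  · rename_i y' h'
    obtain rfl : y' = y := Option.some.inj (h'.symm.trans h)
    rfl
  · rename_i h'
    cases h'.symm.trans h

theorem contr_graph_eq_map {X Y : Type} [Finite X] [Finite Y] (e : X ≃ Y) (a : R.data.A X)
    (u : (y : Y) → R.data.A (pfib (fun x : X => some (e x)) y))
    (hu : ∀ y, u y = R.data.map (equivFiberEquiv e y) R.data.one) :
    R.data.contr (fun x : X => some (e x)) a u = R.data.map e a := by
  rw [← R.map_eq_contr e a, funext hu]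

def pfibCompEquiv {X' X Y : Type} (e : X' ≃ X) (g : X → Option Y) (y : Y) :
    pfib (fun x' => g (e x')) y ≃ pfib g y :=
  e.subtypeEquiv fun _ => Iff.rfl

theorem econtr_graph {X' X Y : Type} [Finite X'] [Finite X] [Finite Y]
    (e : X' ≃ X) (g : X → Option Y)
    (a : (y : Y) → R.data.A (pfib (pcomp g (fun x' => some (e x'))) y)) (y : Y) :
    R.data.econtr g (fun x' => some (e x')) a
        (fun x => R.data.map (equivFiberEquiv e x) R.data.one) y
      = R.data.map (pfibCompEquiv e g y) (a y) := by
  have hres : resMap g (fun x' => some (e x')) y = fun q => some (pfibCompEquiv e g y q) :=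
    funext fun q => resMap_of_eq_some g _ y q rfl q.2
  show R.data.contr (resMap g (fun x' => some (e x')) y) (a y) _ = _
  rw [contr_congr hres]
  refine contr_graph_eq_map _ _ _ fun p => ?_
  rw [map_map, map_map]
  exact @map_eq_map_of_subsingleton _ _ _ _ _
    (pfib_subsingleton_of_injective (pfibCompEquiv e g y).injective p) _ _ _

theorem map_mul_comp_equiv {X' X Y : Type} [Finite X'] [Finite X] [Finite Y]
    (e : X' ≃ X) (g : X → Option Y) (d : R.data.A Y)
    (a : (y : Y) → R.data.A (pfib (pcomp g (fun x' => some (e x'))) y)) :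
    R.data.map e (R.data.mul (pcomp g (fun x' => some (e x'))) d a)
      = R.data.mul g d (fun y => R.data.map (pfibCompEquiv e g y) (a y)) := by
  rw [← R.map_eq_contr e, R.left_lin]
  exact congrArg _ (funext (econtr_graph e g a))

theorem contr_map_comp_equiv {X' X Y : Type} [Finite X'] [Finite X] [Finite Y]
    (e : X ≃ X') (g : X → Option Y) (d : R.data.A X)
    (a : (y : Y) → R.data.A (pfib (pcomp g (fun x' => some (e.symm x'))) y)) :
    R.data.contr (pcomp g (fun x' => some (e.symm x'))) (R.data.map e d) a
      = R.data.contr g d (fun y => R.data.map (pfibCompEquiv e.symm g y) (a y)) := by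
  rw [← R.map_eq_mul e d, R.right_adj]
  exact congrArg _ (funext (econtr_graph e.symm g a))

theorem map_lact {W' W : Type} [Finite W'] [Finite W] (E : W' ≃ W) (t : R.data.A (Fin 1))
    (γ : R.data.A W') :
    R.data.map E (R.data.lact t γ) = R.data.lact t (R.data.map E γ) := by
  refine (map_mul_comp_equiv E (fun _ : W => some (0 : Fin 1)) t
    (fun z => R.data.map (constFiberEquiv W' z) γ)).trans (congrArg _ (funext fun z => ?_))
  erw [map_map, map_map]
  exact congrArg (R.data.map · γ) (Equiv.ext fun _ => rfl)

theorem pair_map {W₁ W₂ : Type} [Finite W₁] [Finite W₂] (E : W₁ ≃ W₂)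
    (α β : R.data.A W₁) :
    R.data.pair (R.data.map E α) (R.data.map E β) = R.data.pair α β := by
  refine (contr_map_comp_equiv E (fun _ : W₁ => some (0 : Fin 1)) α
    (fun z => R.data.map (constFiberEquiv W₂ z) (R.data.map E β))).trans
    (congrArg _ (funext fun z => ?_))
  erw [map_map, map_map]
  exact congrArg (R.data.map · β) (Equiv.ext fun w => Subtype.ext (E.symm_apply_apply w))

/-! ### Operations along a map to a point -/

def pfibEquivOfConst {W V : Type} (ρ : W → Option V) {v₀ : V} (hρ : ∀ w, ρ w = some v₀) :
    W ≃ pfib ρ v₀ where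
  toFun w := ⟨w, hρ w⟩
  invFun q := q.1
  left_inv _ := rfl
  right_inv _ := rfl

def fpEquivOfConst {W V : Type} (ρ : W → Option V) (eV : Fin 1 ≃ V)
    (hρ : ∀ w, ρ w = some (eV 0)) : FP ρ (fun z : Fin 1 => some (eV z)) ≃ W where
  toFun p := p.1.1
  invFun w := ⟨(w, 0), ⟨eV 0, hρ w, rfl⟩⟩
  left_inv _ := Subtype.ext (Prod.ext rfl (Subsingleton.elim _ _))
  right_inv _ := rfl

/-- Right-linearity along the point `eV : [1] ≅ V` rewrites the product as a contraction over
`W ×_V [1] ≅ W`, where it collapses to a transport. -/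
theorem mul_const_eq_lact {W V : Type} [Finite W] [Finite V] (eV : Fin 1 ≃ V)
    (ρ : W → Option V) (hρ : ∀ w, ρ w = some (eV 0)) (σ : R.data.A (Fin 1))
    (c : (v : V) → R.data.A (pfib ρ v)) :
    R.data.mul ρ (R.data.map eV σ) c
      = R.data.lact σ (R.data.map (pfibEquivOfConst ρ hρ).symm (c (eV 0))) := by
  rw [← R.map_eq_contr eV σ, R.right_lin]
  set pt : Fin 1 → Option V := fun z => some (eV z)
  have hpt : pt 0 = some (eV 0) := rfl
  have hSnd : fpSnd ρ pt = fun _ => some (0 : Fin 1) :=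
    funext fun _ => congrArg some (Subsingleton.elim _ _)
  set φ := fpEquivOfConst ρ eV hρ
  set χ := ((fpFiberSnd ρ pt hpt).trans (pfibCongr hSnd 0)).trans
    (constFiberEquiv (FP ρ pt) 0).symm
  have hhead : R.data.mul (fpSnd ρ pt) σ (R.data.atilde ρ pt c)
      = R.data.lact σ (R.data.map χ (c (eV 0))) := by
    rw [mul_congr hSnd]
    refine congrArg _ (pi_fin_one_ext ?_)
    rw [atilde_of_eq_some ρ pt c hpt, map_map, map_map]
    refine congrArg (R.data.map · _) ?_
    simp only [χ, Equiv.trans_assoc, Equiv.symm_trans_self, Equiv.trans_refl]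
  have hunits : ∀ w, R.data.ctilde ρ pt (fun v => R.data.map (equivFiberEquiv eV v) R.data.one) w
      = R.data.map (equivFiberEquiv φ w) R.data.one := by
    intro w
    rw [ctilde_of_eq_some ρ _ _ (hρ w), map_map]
    have : Subsingleton (pfib (fpFst ρ pt) w) :=
      pfib_subsingleton (fun _ _ _ h₁ h₂ => φ.injective (Option.some.inj (h₁.trans h₂.symm))) w
    exact map_eq_map_of_subsingleton _ _ _
  rw [hhead]
  refine (contr_graph_eq_map φ _ _ hunits).trans ?_
  rw [map_lact, map_map]
  exact congrArg (R.data.lact σ) (congrArg (R.data.map · _) (Equiv.ext fun _ => rfl))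

theorem mul_const_one {W V : Type} [Finite W] [Finite V] (eV : Fin 1 ≃ V)
    (ρ : W → Option V) (hρ : ∀ w, ρ w = some (eV 0)) (c : (v : V) → R.data.A (pfib ρ v)) :
    R.data.mul ρ (R.data.map eV R.data.one) c
      = R.data.map (pfibEquivOfConst ρ hρ).symm (c (eV 0)) := by
  rw [mul_const_eq_lact eV ρ hρ R.data.one c, R.one_lact]

/-- Left-adjunction along `W → [1] ≅ V` splits the contraction into a pairing over `W`
followed by a transport. -/
theorem contr_const_eq_pair {W V : Type} [Finite W] [Finite V] (eV : Fin 1 ≃ V)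
    (ρ : W → Option V) (hρ : ∀ w, ρ w = some (eV 0)) (δ : R.data.A W)
    (F : (v : V) → R.data.A (pfib ρ v)) :
    R.data.contr ρ δ F
      = R.data.map eV (R.data.pair δ (R.data.map (pfibEquivOfConst ρ hρ).symm (F (eV 0)))) := by
  set δ' := R.data.map (pfibEquivOfConst ρ hρ).symm (F (eV 0))
  have key := (R.left_adj (fun z : Fin 1 => some (eV z)) (fun _ : W => some (0 : Fin 1)) δ
      (fun v => R.data.map (equivFiberEquiv eV v) R.data.one)
      (fun z => R.data.map (constFiberEquiv W z) δ')).trans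
    (contr_graph_eq_map eV _ _ fun _ => rfl)
  have hfun : ρ = fun _ : W => some (eV 0) := funext hρ
  rw [contr_congr hfun]
  refine Eq.trans (congrArg _ (funext fun v => ?_)) key
  obtain rfl : eV 0 = v := eV.surjective.forall.mpr (fun z => congrArg eV (Subsingleton.elim _ _)) v
  show R.data.map (pfibCongr hfun (eV 0)) (F (eV 0))
      = R.data.mul (resMap (fun z : Fin 1 => some (eV z)) (fun _ : W => some (0 : Fin 1)) (eV 0))
        (R.data.map (equivFiberEquiv eV (eV 0)) R.data.one)
        (fun p => R.data.map (resFiberEquiv (fun z : Fin 1 => some (eV z))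
            (fun _ : W => some (0 : Fin 1)) (eV 0) p)
          (R.data.map (constFiberEquiv W p.1) δ'))
  have : Subsingleton (pfib (fun z : Fin 1 => some (eV z)) (eV 0)) :=
    pfib_subsingleton_of_injective eV.injective _
  have hres : ∀ q, resMap (fun z : Fin 1 => some (eV z)) (fun _ : W => some (0 : Fin 1)) (eV 0) q
      = some ((equivFiberEquiv eV (eV 0)) 0) := fun q =>
    (resMap_of_eq_some _ _ _ q rfl rfl).trans (congrArg some (Subsingleton.elim _ _))
  rw [mul_const_one (equivFiberEquiv eV (eV 0)) _ hres, map_map, map_map, map_map]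
  exact congrArg (R.data.map · _) (Equiv.ext fun _ => Subtype.ext rfl)

/-! ### The scalar action of `A_{[1]}` on a self-adjoint ring -/

def IsSelfAdjoint (R : GenRing) : Prop := ∀ x : R.data.A (Fin 1), R.data.adj x = x

/-- `(γ, t_{id_X})`, the contraction counterpart of `γ ∘ t_{id_X} = ract γ (fun _ => t)`. -/
def rcontr (R : GenRing) {X : Type} [Finite X] (γ : R.data.A X) (t : R.data.A (Fin 1)) :
    R.data.A X :=
  R.data.contr (fun x : X => some x) γ (fun x => R.data.map (idFiberEquiv x) t)

theorem rcontr_eq_pair (σ τ : R.data.A (Fin 1)) : R.rcontr σ τ = R.data.pair σ τ := by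
  have h : (fun z : Fin 1 => some z) = fun _ : Fin 1 => some (0 : Fin 1) :=
    funext fun z => congrArg some (Subsingleton.elim _ _)
  rw [rcontr, contr_congr h]
  refine congrArg _ (funext fun z => ?_)
  rw [map_map]
  exact map_eq_map_of_subsingleton _ _ _

theorem rcontr_zero {X : Type} [Finite X] (t : R.data.A (Fin 1)) :
    R.rcontr (R.data.zero X) t = R.data.zero X :=
  R.contr_zero_left _ _

/-- Right-linearity over `X ×_{[1]} [1] ≅ X` rewrites `t ∘ γ` as a contraction of `γ` against the
diagonal family `1ᵗ ∘ t = tᵗ`, which is `t` by self-adjointness. -/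
theorem lact_eq_rcontr (hR : R.IsSelfAdjoint) (t : R.data.A (Fin 1)) {X : Type} [Finite X]
    (γ : R.data.A X) : R.data.lact t γ = R.rcontr γ t := by
  set cX : X → Option (Fin 1) := fun _ => some 0
  set ig : Fin 1 → Option (Fin 1) := fun z => some z
  have key := R.right_lin cX ig R.data.one (fun z => R.data.map (constFiberEquiv X z) γ)
    (fun z => R.data.map (idFiberEquiv z) t)
  rw [show R.data.contr ig R.data.one (fun z => R.data.map (idFiberEquiv z) t) = t from
    (rcontr_eq_pair _ _).trans (hR t)] at key
  have hρ : ∀ p : FP cX ig, fpSnd cX ig p = some ((Equiv.refl (Fin 1)) 0) :=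
    fun _ => congrArg some (Subsingleton.elim _ _)
  have hhead := mul_const_one (R := R) (Equiv.refl (Fin 1)) (fpSnd cX ig) hρ
    (R.data.atilde cX ig (fun z => R.data.map (constFiberEquiv X z) γ))
  rw [R.map_refl] at hhead
  rw [hhead] at key
  simp only [Equiv.refl_apply] at key
  erw [atilde_of_eq_some cX ig _ (rfl : ig 0 = some 0), map_map, map_map] at key
  set φ := fpEquivOfConst cX (Equiv.refl (Fin 1)) (fun _ => rfl)
  have key2 := contr_map_comp_equiv (R := R) φ.symm (fun x : X => some x) γ
    (R.data.ctilde cX ig (fun z => R.data.map (idFiberEquiv z) t))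
  rw [show R.data.map φ.symm γ = R.data.map ((constFiberEquiv X 0).trans
      ((fpFiberSnd cX ig (rfl : ig 0 = some 0)).trans (pfibEquivOfConst (fpSnd cX ig) hρ).symm)) γ
    from congrArg (R.data.map · γ) (Equiv.ext fun _ => Subtype.ext rfl)] at key2
  refine key.trans (key2.trans (congrArg _ (funext fun y => ?_)))
  erw [ctilde_of_eq_some cX ig _ (rfl : cX y = some 0), map_map, map_map]
  exact map_eq_map_of_subsingleton _ _ _

theorem ract_const_eq_rcontr (hR : R.IsSelfAdjoint) (t : R.data.A (Fin 1)) {X : Type}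
    [Finite X] (γ : R.data.A X) : R.data.ract γ (fun _ => t) = R.rcontr γ t := by
  refine (R.contr_one_id X _).symm.trans ((R.right_adj (fun x : X => some x)
    (fun x : X => some x) γ (R.data.oneId X) _).trans (congrArg _ (funext fun x => ?_)))
  have hres : ∀ q, resMap (fun x : X => some x) (fun x : X => some x) x q
      = some ((idFiberEquiv x) 0) := fun q =>
    (resMap_of_eq_some _ _ _ q rfl q.2).trans (congrArg some (Subsingleton.elim _ _))
  show R.data.contr (resMap (fun x : X => some x) (fun x : X => some x) x)
    (R.data.map (idFiberEquiv x) R.data.one) _ = _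
  rw [contr_const_eq_pair (idFiberEquiv x) _ hres, map_map, map_map,
    @map_eq_map_of_subsingleton _ _ _ _ _ (pfib_some_subsingleton x) _ (idFiberEquiv x) t]
  erw [pair_map]
  exact congrArg _ (hR t)

theorem rcontr_mul_right {X Y : Type} [Finite X] [Finite Y] (g : X → Option Y) (d : R.data.A Y)
    (a : (y : Y) → R.data.A (pfib g y)) (t : R.data.A (Fin 1)) :
    R.rcontr (R.data.mul g d a) t = R.data.mul g d (fun y => R.rcontr (a y) t) := by
  refine (R.left_lin g (fun x : X => some x) d a _).trans (congrArg _ (funext fun y => ?_))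
  show R.data.contr (resMap g (fun x : X => some x) y) (a y) _ = _
  erw [contr_congr (resMap_id_right g y)]
  refine congrArg _ (funext fun p => ?_)
  rw [map_map, map_map]
  exact @map_eq_map_of_subsingleton _ _ _ _ _ (pfib_some_subsingleton p) _ _ _

theorem emul_id_left_const {X Y : Type} [Finite X] [Finite Y] (f : X → Option Y)
    (t : R.data.A (Fin 1)) (b : (y : Y) → R.data.A (pfib f y)) (y : Y) :
    R.data.map (pfibCongr (pcomp_id_left f) y)
      (R.data.emul (fun y : Y => some y) f (fun z => R.data.map (idFiberEquiv z) t) b y)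
      = R.data.lact t (b y) := by
  have hres : ∀ q : pfib (pcomp (fun y : Y => some y) f) y,
      resMap (fun y : Y => some y) f y q = some ((idFiberEquiv y) 0) := fun q =>
    resMap_of_eq_some _ _ y q ((congrFun (pcomp_id_left f) q.1).symm.trans q.2) rfl
  show R.data.map _ (R.data.mul (resMap (fun y : Y => some y) f y)
    (R.data.map (idFiberEquiv y) t) _) = _
  rw [mul_const_eq_lact (idFiberEquiv y) _ hres, map_lact, map_map, map_map]
  exact congrArg _ ((congrArg (R.data.map · (b y)) (Equiv.ext fun _ => rfl)).trans
    (R.map_refl _ (b y)))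

theorem rcontr_mul_left (hR : R.IsSelfAdjoint) {X Y : Type} [Finite X] [Finite Y]
    (g : X → Option Y) (d : R.data.A Y) (a : (y : Y) → R.data.A (pfib g y))
    (t : R.data.A (Fin 1)) :
    R.rcontr (R.data.mul g d a) t = R.data.mul g (R.rcontr d t) a := by
  rw [rcontr_mul_right, ← ract_const_eq_rcontr hR, GenRingData.ract,
    ← R.assoc (fun y : Y => some y) g d, mul_congr (pcomp_id_left g)]
  exact congrArg _ (funext fun y => by rw [emul_id_left_const, lact_eq_rcontr hR])

theorem rcontr_contr_right (hR : R.IsSelfAdjoint) {X Y : Type} [Finite X] [Finite Y]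
    (g : X → Option Y) (d : R.data.A X) (c : (y : Y) → R.data.A (pfib g y))
    (t : R.data.A (Fin 1)) :
    R.rcontr (R.data.contr g d c) t = R.data.contr g d (fun y => R.rcontr (c y) t) := by
  rw [rcontr, ← R.left_adj (fun y : Y => some y) g d, contr_congr (pcomp_id_left g)]
  exact congrArg _ (funext fun y => by rw [emul_id_left_const, lact_eq_rcontr hR])

theorem rcontr_contr_left (hR : R.IsSelfAdjoint) {X Y : Type} [Finite X] [Finite Y]
    (g : X → Option Y) (d : R.data.A X) (c : (y : Y) → R.data.A (pfib g y))
    (t : R.data.A (Fin 1)) :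
    R.rcontr (R.data.contr g d c) t = R.data.contr g (R.rcontr d t) c := by
  rw [rcontr_contr_right hR, rcontr, ← R.left_adj g (fun x : X => some x) d c]
  refine congrArg _ (funext fun y => ?_)
  show R.rcontr (c y) t = R.data.mul (resMap g (fun x : X => some x) y) (c y) _
  rw [mul_congr (resMap_id_right g y), ← ract_const_eq_rcontr hR, GenRingData.ract]
  refine congrArg _ (funext fun p => ?_)
  rw [map_map, map_map]
  exact @map_eq_map_of_subsingleton _ _ _ _ _ (pfib_some_subsingleton p) _ _ _

theorem rcontr_map (hR : R.IsSelfAdjoint) {X Y : Type} [Finite X] [Finite Y] (E : X ≃ Y)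
    (γ : R.data.A X) (t : R.data.A (Fin 1)) :
    R.rcontr (R.data.map E γ) t = R.data.map E (R.rcontr γ t) := by
  rw [← lact_eq_rcontr hR, ← lact_eq_rcontr hR, map_lact]

theorem rcontr_eq_op (hR : R.IsSelfAdjoint) (σ t : R.data.A (Fin 1)) :
    R.rcontr σ t = R.data.op t σ := by
  have h : (fun _ : Fin 1 => some (0 : Fin 1)) = fun z : Fin 1 => some z :=
    funext fun z => congrArg some (Subsingleton.elim _ _)
  rw [← lact_eq_rcontr hR, GenRingData.lact, mul_congr h]
  refine congrArg _ (funext fun z => ?_)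
  rw [map_map]
  exact map_eq_map_of_subsingleton _ _ _

theorem op_one (σ : R.data.A (Fin 1)) : R.data.op σ R.data.one = σ :=
  R.mul_one_id (Fin 1) σ

theorem one_op (hR : R.IsSelfAdjoint) (σ : R.data.A (Fin 1)) : R.data.op R.data.one σ = σ := by
  rw [← rcontr_eq_op hR, ← lact_eq_rcontr hR, R.one_lact]

theorem op_zero (σ : R.data.A (Fin 1)) :
    R.data.op σ (R.data.zero (Fin 1)) = R.data.zero (Fin 1) := by
  rw [GenRingData.op, funext fun z => R.map_zero (idFiberEquiv z)]
  exact R.mul_zero_right _ σ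

theorem op_assoc (hR : R.IsSelfAdjoint) (u v w : R.data.A (Fin 1)) :
    R.data.op (R.data.op u v) w = R.data.op u (R.data.op v w) := by
  have h := rcontr_mul_left hR (fun z : Fin 1 => some z) v
    (fun z => R.data.map (idFiberEquiv z) w) u
  rw [rcontr_eq_op hR, rcontr_eq_op hR] at h
  exact h.symm

/-- Both products are the pairing `(σ, τ)`: `τ ∘ σ = (σ, τ)` directly, and
`σ ∘ τ = σ ∘ (1, τ) = (σ, τ)` by self-adjointness. -/
theorem op_comm (hR : R.IsSelfAdjoint) (σ τ : R.data.A (Fin 1)) :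
    R.data.op σ τ = R.data.op τ σ := by
  have h : R.data.op σ τ = R.data.pair σ τ := by
    conv_lhs => rw [← hR τ]
    rw [← rcontr_eq_op hR, GenRingData.adj, GenRingData.pair, rcontr_contr_left hR,
      rcontr_eq_op hR, op_one]
    rfl
  rw [h, ← rcontr_eq_pair, rcontr_eq_op hR]

theorem pair_one (hR : R.IsSelfAdjoint) (σ : R.data.A (Fin 1)) :
    R.data.pair σ R.data.one = σ := by
  rw [← rcontr_eq_pair, rcontr_eq_op hR, one_op hR]

theorem opPow_add (hR : R.IsSelfAdjoint) (a : R.data.A (Fin 1)) (m n : ℕ) :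
    R.data.opPow a (m + n) = R.data.op (R.data.opPow a m) (R.data.opPow a n) := by
  induction m with
  | zero => rw [Nat.zero_add, GenRingData.opPow, one_op hR]
  | succ m ih =>
    rw [Nat.succ_add, GenRingData.opPow, GenRingData.opPow, ih, op_assoc hR]

/-! ### `h`-ideals and their saturations -/

theorem IsHIdeal.zero_mem {I : Set (R.data.A (Fin 1))} (hI : R.IsHIdeal I) :
    R.data.zero (Fin 1) ∈ I := by
  have h := hI Empty (R.data.zero Empty) (R.data.zero Empty) Empty.elim nofun
  rwa [R.isEmpty_eq_zero Empty (R.data.ract _ _), GenRingData.pair, R.contr_zero_left] at h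

theorem IsHIdeal.op_mem (hR : R.IsSelfAdjoint) {I : Set (R.data.A (Fin 1))} (hI : R.IsHIdeal I)
    (w : R.data.A (Fin 1)) {i : R.data.A (Fin 1)} (hi : i ∈ I) : R.data.op w i ∈ I := by
  have h := hI (Fin 1) w R.data.one (fun _ => i) fun _ => hi
  rwa [pair_one hR] at h

theorem IsHIdeal.setOf_op_mem (hR : R.IsSelfAdjoint) {M : Set (R.data.A (Fin 1))}
    (hM : R.IsHIdeal M) (t : R.data.A (Fin 1)) : R.IsHIdeal {k | R.data.op t k ∈ M} := by
  intro X _ b d c hc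
  show R.data.op t (R.data.pair (R.data.ract b c) d) ∈ M
  rw [← rcontr_eq_op hR, GenRingData.pair, rcontr_contr_left hR, GenRingData.ract,
    rcontr_mul_right]
  simp only [rcontr_map hR, rcontr_eq_op hR]
  exact hM X b d (fun x => R.data.op t (c x)) hc

def hSpan (R : GenRing) (E : Set (R.data.A (Fin 1))) : Set (R.data.A (Fin 1)) :=
  ⋂₀ {I | R.IsHIdeal I ∧ E ⊆ I}

theorem isHIdeal_hSpan (E : Set (R.data.A (Fin 1))) : R.IsHIdeal (R.hSpan E) :=
  fun X _ b d c hc _ hI => hI.1 X b d c fun x => hc x _ hI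

theorem subset_hSpan (E : Set (R.data.A (Fin 1))) : E ⊆ R.hSpan E :=
  fun _ he _ hI => hI.2 he

theorem hSpan_subset {E I : Set (R.data.A (Fin 1))} (hI : R.IsHIdeal I) (hE : E ⊆ I) :
    R.hSpan E ⊆ I :=
  fun _ hx => hx I ⟨hI, hE⟩

def eIdeal (R : GenRing) (I : Set (R.data.A (Fin 1))) : EqvIdeal R where
  rel := R.erel I
  refl X _ a _ _ := EqvIdeal.refl _ X a
  symm X _ _ _ h ε hε := ε.symm X (h ε hε)
  trans X _ _ _ _ h h' ε hε := ε.trans X (h ε hε) (h' ε hε)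
  mul_left f _ _ b h ε hε := ε.mul_left f b (h ε hε)
  mul_right f a _ _ h ε hε := ε.mul_right f a fun y => h y ε hε
  contr_left f _ _ b h ε hε := ε.contr_left f b (h ε hε)
  contr_right f a _ _ h ε hε := ε.contr_right f a fun y => h y ε hε

theorem erel_of_mem {I : Set (R.data.A (Fin 1))} {i : R.data.A (Fin 1)} (hi : i ∈ I) :
    R.erel I (Fin 1) i (R.data.zero (Fin 1)) :=
  fun _ hε => hε i hi

theorem erel_mono {I J : Set (R.data.A (Fin 1))} (hIJ : I ⊆ J) {X : Type} [Finite X]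
    {a b : R.data.A X} (h : R.erel I X a b) : R.erel J X a b :=
  fun ε hε => h ε fun i hi => hε i (hIJ hi)

def saturation (R : GenRing) (I : Set (R.data.A (Fin 1))) : Set (R.data.A (Fin 1)) :=
  {x | R.erel I (Fin 1) x (R.data.zero (Fin 1))}

theorem subset_saturation (I : Set (R.data.A (Fin 1))) : I ⊆ R.saturation I :=
  fun _ => erel_of_mem

theorem saturation_saturation (I : Set (R.data.A (Fin 1))) :
    R.saturation (R.saturation I) = R.saturation I :=
  Set.Subset.antisymm (fun _ h ε hε => h ε fun _ hi => hi ε hε) (subset_saturation _)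

theorem saturation_singleton_zero :
    R.saturation {R.data.zero (Fin 1)} = {R.data.zero (Fin 1)} :=
  Set.Subset.antisymm (fun _ h => h (EqvIdeal.eqRel R) fun _ hi => hi)
    (subset_saturation _)

theorem isHIdeal_saturation (I : Set (R.data.A (Fin 1))) : R.IsHIdeal (R.saturation I) := by
  intro X _ b d c hc ε hε
  have hc' : ∀ x : X, ε.rel _ (R.data.map (idFiberEquiv x) (c x)) (R.data.zero _) := fun x => by
    simpa only [R.map_zero] using ε.rel_map (idFiberEquiv x) (hc x ε hε)
  have h := ε.contr_left (fun _ : X => some (0 : Fin 1))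
    (fun z => R.data.map (constFiberEquiv X z) d) (ε.mul_right (fun x : X => some x) b hc')
  rwa [R.mul_zero_right, R.contr_zero_left] at h

theorem isStableHIdeal_of_saturation_eq {I : Set (R.data.A (Fin 1))} (hI : R.IsHIdeal I)
    (hsat : R.saturation I = I) : R.IsStableHIdeal I := by
  refine ⟨hI, fun a b hab => ?_⟩
  rw [← hsat]
  exact ⟨fun ha => (R.eIdeal I).trans _ ((R.eIdeal I).symm _ hab) ha,
    fun hb => (R.eIdeal I).trans _ hab hb⟩

/-- Since `t ∘ -` commutes with all operations, `α ∼ β ↦ t ∘ α ∼_{E(M)} t ∘ β` is an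
equivalence ideal. -/
def rcontrComap (hR : R.IsSelfAdjoint) (M : Set (R.data.A (Fin 1))) (t : R.data.A (Fin 1)) :
    EqvIdeal R where
  rel X _ α β := R.erel M X (R.rcontr α t) (R.rcontr β t)
  refl X _ _ := (R.eIdeal M).refl X _
  symm X _ _ _ h := (R.eIdeal M).symm X h
  trans X _ _ _ _ h h' := (R.eIdeal M).trans X h h'
  mul_left f _ _ b h := by
    simp only [rcontr_mul_left hR]
    exact (R.eIdeal M).mul_left f b h
  mul_right f a _ _ h := by
    simp only [rcontr_mul_right]
    exact (R.eIdeal M).mul_right f a h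
  contr_left f _ _ b h := by
    simp only [rcontr_contr_left hR]
    exact (R.eIdeal M).contr_left f b h
  contr_right f a _ _ h := by
    simp only [rcontr_contr_right hR]
    exact (R.eIdeal M).contr_right f a h

theorem op_mem_saturation_of_mem_saturation_hSpan (hR : R.IsSelfAdjoint)
    {M E : Set (R.data.A (Fin 1))} (hM : R.IsHIdeal M) {x : R.data.A (Fin 1)}
    (hE : ∀ i ∈ E, R.data.op x i ∈ M) {t : R.data.A (Fin 1)}
    (ht : t ∈ R.saturation (R.hSpan E)) : R.data.op x t ∈ R.saturation M := by
  have hspan := hSpan_subset (hM.setOf_op_mem hR x) hE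
  have h : R.erel M _ (R.rcontr t x) (R.rcontr (R.data.zero (Fin 1)) x) :=
    ht (rcontrComap hR M x) fun i hi => by
      show R.erel M _ (R.rcontr i x) (R.rcontr (R.data.zero (Fin 1)) x)
      rw [rcontr_zero, rcontr_eq_op hR]
      exact erel_of_mem (hspan hi)
  rwa [rcontr_eq_op hR, rcontr_zero] at h

/-! ### Maximal `h`-ideals whose saturation avoids a multiplicative set -/

theorem exists_mem_forall_subset_of_isChain {α : Type*} {c : Set (Set α)}
    (hc : IsChain (· ⊆ ·) c) (hne : c.Nonempty) {Y : Type} [Finite Y] (f : Y → Set α)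
    (hf : ∀ y, f y ∈ c) : ∃ I ∈ c, ∀ y, f y ⊆ I := by
  rcases isEmpty_or_nonempty Y with hY | hY
  · obtain ⟨I, hI⟩ := hne
    exact ⟨I, hI, hY.elim⟩
  · obtain ⟨m, ⟨y₀, rfl⟩, hmax⟩ := Set.Finite.exists_maximalFor id _ (Set.finite_range f)
      (Set.range_nonempty f)
    refine ⟨f y₀, hf y₀, fun y => ?_⟩
    rcases hc.total (hf y) (hf y₀) with h | h
    · exact h
    · exact hmax ⟨y, rfl⟩ h

/-- Over a nonempty chain `c`, the relations `E(I)`, `I ∈ c`, form a directed family whose union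
is again an equivalence ideal: the operations involve only finitely many arguments. -/
def chainEIdeal (c : Set (Set (R.data.A (Fin 1)))) (hc : IsChain (· ⊆ ·) c)
    (hne : c.Nonempty) : EqvIdeal R where
  rel X _ α β := ∃ I ∈ c, R.erel I X α β
  refl X _ α := hne.elim fun I hI => ⟨I, hI, (R.eIdeal I).refl X α⟩
  symm X _ _ _ := fun ⟨I, hI, h⟩ => ⟨I, hI, (R.eIdeal I).symm X h⟩
  trans X _ _ _ _ := fun ⟨I, hI, h⟩ ⟨J, hJ, h'⟩ => by
    rcases hc.total hI hJ with hIJ | hJI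
    · exact ⟨J, hJ, (R.eIdeal J).trans X (erel_mono hIJ h) h'⟩
    · exact ⟨I, hI, (R.eIdeal I).trans X h (erel_mono hJI h')⟩
  mul_left f _ _ b := fun ⟨I, hI, h⟩ => ⟨I, hI, (R.eIdeal I).mul_left f b h⟩
  mul_right f α _ _ h := by
    choose g hg using h
    obtain ⟨I, hI, hsub⟩ := exists_mem_forall_subset_of_isChain hc hne g fun y => (hg y).1
    exact ⟨I, hI, (R.eIdeal I).mul_right f α fun y => erel_mono (hsub y) (hg y).2⟩
  contr_left f _ _ b := fun ⟨I, hI, h⟩ => ⟨I, hI, (R.eIdeal I).contr_left f b h⟩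
  contr_right f α _ _ h := by
    choose g hg using h
    obtain ⟨I, hI, hsub⟩ := exists_mem_forall_subset_of_isChain hc hne g fun y => (hg y).1
    exact ⟨I, hI, (R.eIdeal I).contr_right f α fun y => erel_mono (hsub y) (hg y).2⟩

theorem exists_erel_of_erel_sUnion {c : Set (Set (R.data.A (Fin 1)))} (hc : IsChain (· ⊆ ·) c)
    (hne : c.Nonempty) {X : Type} [Finite X] {α β : R.data.A X} (h : R.erel (⋃₀ c) X α β) :
    ∃ I ∈ c, R.erel I X α β :=
  h (chainEIdeal c hc hne) fun _ ⟨I, hI, hi⟩ => ⟨I, hI, erel_of_mem hi⟩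

def SaturationAvoids (R : GenRing) (S I : Set (R.data.A (Fin 1))) : Prop :=
  R.IsHIdeal I ∧ Disjoint (R.saturation I) S

theorem saturationAvoids_sUnion {S : Set (R.data.A (Fin 1))} {c : Set (Set (R.data.A (Fin 1)))}
    (hcS : ∀ I ∈ c, R.SaturationAvoids S I) (hc : IsChain (· ⊆ ·) c) (hne : c.Nonempty) :
    R.SaturationAvoids S (⋃₀ c) := by
  refine ⟨fun X _ b d f hf => ?_, Set.disjoint_left.mpr fun x hx hxS => ?_⟩
  · choose g hg using hf
    obtain ⟨I, hI, hsub⟩ := exists_mem_forall_subset_of_isChain hc hne g fun x => (hg x).1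
    exact Set.subset_sUnion_of_mem hI ((hcS I hI).1 X b d f fun x => hsub x (hg x).2)
  · obtain ⟨I, hI, hxI⟩ := exists_erel_of_erel_sUnion hc hne hx
    exact Set.disjoint_left.mp (hcS I hI).2 hxI hxS

theorem exists_maximal_saturationAvoids {S : Set (R.data.A (Fin 1))}
    (h0 : R.data.zero (Fin 1) ∉ S) : ∃ M, Maximal (R.SaturationAvoids S) M := by
  have hzero : R.SaturationAvoids S {R.data.zero (Fin 1)} := by
    rw [SaturationAvoids, ← saturation_singleton_zero]
    refine ⟨isHIdeal_saturation _, ?_⟩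
    rwa [saturation_saturation, saturation_singleton_zero, Set.disjoint_singleton_left]
  obtain ⟨M, -, hM⟩ := zorn_subset_nonempty {I | R.SaturationAvoids S I}
    (fun c hcS hc hne => ⟨⋃₀ c, saturationAvoids_sUnion hcS hc hne,
      fun _ => Set.subset_sUnion_of_mem⟩) _ hzero
  exact ⟨M, hM⟩

theorem saturation_eq_of_maximal {S M : Set (R.data.A (Fin 1))}
    (hM : Maximal (R.SaturationAvoids S) M) : R.saturation M = M :=
  Set.Subset.antisymm
    (hM.2 ⟨isHIdeal_saturation M, by rw [saturation_saturation]; exact hM.1.2⟩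
      (subset_saturation M))
    (subset_saturation M)

theorem exists_mem_saturation_hSpan_insert_of_maximal {S M : Set (R.data.A (Fin 1))}
    (hM : Maximal (R.SaturationAvoids S) M) {x : R.data.A (Fin 1)} (hx : x ∉ M) :
    ∃ s ∈ S, s ∈ R.saturation (R.hSpan (insert x M)) := by
  by_contra! h
  have hspan : R.SaturationAvoids S (R.hSpan (insert x M)) :=
    ⟨isHIdeal_hSpan _, Set.disjoint_left.mpr fun s hs hsS => h s hsS hs⟩
  exact hx (hM.2 hspan ((Set.subset_insert x M).trans (subset_hSpan _))
    (subset_hSpan _ (Set.mem_insert x M)))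

/-- If `x ∘ y ∈ M` with `x, y ∉ M`, maximality yields `t, s ∈ S` in the saturations of
`⟨M, y⟩` and `⟨M, x⟩`; multiplying by `x` and then by `t` puts `t ∘ s ∈ S` into `M`. -/
theorem isPrimeH_of_maximal (hR : R.IsSelfAdjoint) {S M : Set (R.data.A (Fin 1))}
    (h1 : R.data.one ∈ S) (hS : ∀ s ∈ S, ∀ t ∈ S, R.data.op s t ∈ S)
    (hM : Maximal (R.SaturationAvoids S) M) : R.IsPrimeH M := by
  have hsat := saturation_eq_of_maximal hM
  have hMS : Disjoint M S := hsat ▸ hM.1.2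
  refine ⟨hM.1.1, fun h => Set.disjoint_left.mp hMS h h1, fun x y hxy => ?_⟩
  by_contra! hxy'
  obtain ⟨t, htS, ht⟩ := exists_mem_saturation_hSpan_insert_of_maximal hM hxy'.2
  have hxt : R.data.op x t ∈ M := hsat ▸ op_mem_saturation_of_mem_saturation_hSpan hR hM.1.1
    (Set.forall_mem_insert.mpr ⟨hxy, fun _ hi => hM.1.1.op_mem hR x hi⟩) ht
  obtain ⟨s, hsS, hs⟩ := exists_mem_saturation_hSpan_insert_of_maximal hM hxy'.1
  have hts : R.data.op t s ∈ M := hsat ▸ op_mem_saturation_of_mem_saturation_hSpan hR hM.1.1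
    (Set.forall_mem_insert.mpr ⟨by rwa [op_comm hR], fun _ hi => hM.1.1.op_mem hR t hi⟩) hs
  exact Set.disjoint_left.mp hMS hts (hS t htS s hsS)

theorem exists_isPrimeH_isStableHIdeal_disjoint (hR : R.IsSelfAdjoint)
    {S : Set (R.data.A (Fin 1))} (h1 : R.data.one ∈ S)
    (hS : ∀ s ∈ S, ∀ t ∈ S, R.data.op s t ∈ S) (h0 : R.data.zero (Fin 1) ∉ S) :
    ∃ M, R.IsPrimeH M ∧ R.IsStableHIdeal M ∧ Disjoint M S := by
  obtain ⟨M, hM⟩ := exists_maximal_saturationAvoids h0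
  have hsat := saturation_eq_of_maximal hM
  exact ⟨M, isPrimeH_of_maximal hR h1 hS hM, isStableHIdeal_of_saturation_eq hM.1.1 hsat,
    hsat ▸ hM.1.2⟩

theorem IsPrimeH.mem_of_opPow_mem {P : Set (R.data.A (Fin 1))} (hP : R.IsPrimeH P)
    {a : R.data.A (Fin 1)} {n : ℕ} (hn : 0 < n) (h : R.data.opPow a n ∈ P) : a ∈ P := by
  induction n with
  | zero => omega
  | succ k ih =>
    rcases hP.2.2 a _ h with ha | hk
    · exact ha
    · rcases Nat.eq_zero_or_pos k with rfl | hk0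
      · exact absurd hk hP.2.1
      · exact ih hk0 hk

theorem zero_notMem_range_opPow {a : R.data.A (Fin 1)}
    (ha : ¬∃ n, 0 < n ∧ R.data.opPow a n = R.data.zero (Fin 1)) :
    R.data.zero (Fin 1) ∉ Set.range (R.data.opPow a) := by
  rintro ⟨n, hn⟩
  rcases Nat.eq_zero_or_pos n with rfl | hpos
  · refine ha ⟨1, one_pos, ?_⟩
    show R.data.op a (R.data.opPow a 0) = _
    rw [hn, op_zero]
  · exact ha ⟨n, hpos, hn⟩

end GenRing

/-- **Density of the stable spectrum.**  For a self-adjoint generalized ring `R`,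
the set `ESpec(R)` of stable primes is dense in `spec(R)`: for every `a ∈ A_{[1]}`,
the basic open set `D_a` is empty if and only if `D_a ∩ ESpec(R)` is empty, both
being equivalent to `a` being nilpotent. -/
theorem stable_primes_dense (R : GenRing)
    (hsa : ∀ x : R.data.A (Fin 1), R.data.adj x = x) (a : R.data.A (Fin 1)) :
    (R.basicOpen a = ∅ ↔
        {p : SpecG R | p ∈ R.basicOpen a ∧ R.IsStableHIdeal p.I} = ∅) ∧
      (R.basicOpen a = ∅ ↔ ∃ n, 0 < n ∧ R.data.opPow a n = R.data.zero (Fin 1)) := by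
  by_cases hnil : ∃ n, 0 < n ∧ R.data.opPow a n = R.data.zero (Fin 1)
  · obtain ⟨n, hn, ha⟩ := hnil
    have hD : R.basicOpen a = ∅ := Set.eq_empty_of_forall_notMem fun p hp =>
      hp (p.prime.mem_of_opPow_mem hn (ha ▸ p.prime.1.zero_mem))
    refine ⟨iff_of_true hD (Set.eq_empty_of_forall_notMem fun p hp => ?_),
      iff_of_true hD ⟨n, hn, ha⟩⟩
    exact Set.eq_empty_iff_forall_notMem.mp hD p hp.1
  · obtain ⟨M, hMp, hMs, hMS⟩ := GenRing.exists_isPrimeH_isStableHIdeal_disjoint hsa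
      (S := Set.range (R.data.opPow a)) ⟨0, rfl⟩
      (fun _ ⟨m, hm⟩ _ ⟨n, hn⟩ => ⟨m + n, hm ▸ hn ▸ GenRing.opPow_add hsa a m n⟩)
      (GenRing.zero_notMem_range_opPow hnil)
    have hp : (⟨M, hMp⟩ : SpecG R) ∈ R.basicOpen a :=
      fun h => Set.disjoint_left.mp hMS h ⟨1, GenRing.op_one a⟩
    have hD : R.basicOpen a ≠ ∅ := Set.nonempty_iff_ne_empty.mp ⟨_, hp⟩
    exact ⟨iff_of_false hD (Set.nonempty_iff_ne_empty.mp ⟨_, hp, hMs⟩), iff_of_false hD hnil⟩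

end
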